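/- arXiv:2510.27414 — 2 statements merged into one kernel-verified Lean document; each statement's English description precedes it below -/
import Mathlib

section
/- Generalized sector condition (scalar case): let ū > 0, sat(u) = min(ū,|u|)·sign(u), φ(u) = sat(u) - u. For any g, x ∈ ℝ with |g·x| ≤ ū and any t ≥ 0, one has φ(u)·t·(sat(u) + g·x) ≤ 0 for every u ∈ ℝ. -/
noncomputable def satR (ub : ℝ) (u : ℝ) : ℝ := min ub |u| * Real.sign u

noncomputable def deadzoneR (ub : ℝ) (u : ℝ) : ℝ := satR ub u - u

theorem sector_condition_scalar (ub : ℝ) (hub : 0 < ub)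
    (g x : ℝ) (hgx : |g * x| ≤ ub) (t : ℝ) (ht : 0 ≤ t) :
    ∀ u : ℝ, deadzoneR ub u * t * (satR ub u + g * x) ≤ 0 := by
  intro u
  have hw1 : -ub ≤ g * x := (abs_le.mp hgx).1
  have hw2 : g * x ≤ ub := (abs_le.mp hgx).2
  rcases le_or_gt (|u|) ub with h | h
  · have hsat : satR ub u = u := by
      unfold satR
      rw [min_eq_right h]
      rcases lt_trichotomy u 0 with hu | hu | hu
      · rw [Real.sign_of_neg hu, abs_of_neg hu]; ring
      · simp [hu]
      · rw [Real.sign_of_pos hu, abs_of_pos hu]; ring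
    simp [deadzoneR, hsat]
  · have hub' : min ub |u| = ub := min_eq_left h.le
    rcases lt_trichotomy u 0 with hu | hu | hu
    · have hsat : satR ub u = -ub := by
        unfold satR; rw [hub', Real.sign_of_neg hu]; ring
      have hlt : ub < -u := by rwa [abs_of_neg hu] at h
      have h1 : 0 ≤ deadzoneR ub u := by unfold deadzoneR; rw [hsat]; linarith
      have h2 : satR ub u + g * x ≤ 0 := by rw [hsat]; linarith
      exact mul_nonpos_of_nonneg_of_nonpos (mul_nonneg h1 ht) h2
    · simp [hu] at h; linarith
    · have hsat : satR ub u = ub := by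
        unfold satR; rw [hub', Real.sign_of_pos hu]; ring
      have hlt : ub < u := by rwa [abs_of_pos hu] at h
      have h1 : deadzoneR ub u ≤ 0 := by unfold deadzoneR; rw [hsat]; linarith
      have h2 : 0 ≤ satR ub u + g * x := by rw [hsat]; linarith
      exact mul_nonpos_of_nonpos_of_nonneg (mul_nonpos_of_nonpos_of_nonneg h1 ht) h2
end

section
/- Generalized sector condition (vector case): let ū > 0 and sat, φ be the componentwise saturation and dead-zone on ℝ^m. Let G ∈ ℝ^{m×n}, T ∈ ℝ^{m×m} a diagonal matrix with positive diagonal entries, and x ∈ ℝ^n with |(Gx)_ℓ| ≤ ū for all ℓ = 1,…,m. Then for every u ∈ ℝ^m, φ(u)ᵀ T (sat(u) + Gx) ≤ 0. -/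
open Matrix

noncomputable def satV {m : ℕ} (ub : ℝ) (u : Fin m → ℝ) : Fin m → ℝ :=
  fun i => satR ub (u i)

noncomputable def deadzone {m : ℕ} (ub : ℝ) (u : Fin m → ℝ) : Fin m → ℝ :=
  satV ub u - u

lemma satR_scalar (ub : ℝ) (hub : 0 < ub) (u w : ℝ) (hw : |w| ≤ ub) :
    (satR ub u - u) * (satR ub u + w) ≤ 0 := by
  unfold satR
  rcases lt_trichotomy u 0 with h | h | h
  · rw [Real.sign_of_neg h, abs_of_neg h]
    rcases le_total ub (-u) with h2 | h2
    · rw [min_eq_left h2]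
      rw [abs_le] at hw
      nlinarith
    · rw [min_eq_right h2]; nlinarith
  · simp [h, Real.sign_zero]
  · rw [Real.sign_of_pos h, abs_of_pos h]
    rcases le_total ub u with h2 | h2
    · rw [min_eq_left h2]
      rw [abs_le] at hw
      nlinarith
    · rw [min_eq_right h2]; nlinarith

theorem sector_condition_vector {m n : ℕ} (ub : ℝ) (hub : 0 < ub)
    (G : Matrix (Fin m) (Fin n) ℝ) (T : Matrix (Fin m) (Fin m) ℝ)
    (hTdiag : T.IsDiag) (hTpos : ∀ i, 0 < T i i)
    (x : Fin n → ℝ) (hx : ∀ ℓ : Fin m, |(G.mulVec x) ℓ| ≤ ub) :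
    ∀ u : Fin m → ℝ,
      deadzone ub u ⬝ᵥ T.mulVec (satV ub u + G.mulVec x) ≤ 0 := by
  intro u
  have hT : ∀ i, T.mulVec (satV ub u + G.mulVec x) i
      = T i i * (satV ub u i + G.mulVec x i) := by
    intro i
    unfold Matrix.mulVec dotProduct
    rw [Finset.sum_eq_single i]
    · simp
    · intro j _ hj
      simp [hTdiag (Ne.symm hj)]
    · simp
  unfold dotProduct
  apply Finset.sum_nonpos
  intro i _
  rw [hT i]
  have := satR_scalar ub hub (u i) (G.mulVec x i) (hx i)
  have hTi := (hTpos i).le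
  simp only [deadzone, satV, Pi.sub_apply]
  nlinarith
end
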